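/- Define backward recursions m₁(T)=1, m₂(T)=m₃(T)=0, m₄(T)=1 and for t<T: m₁(t)=1+(1−α₀)m₁(t+1)+α₀ m₂(t+1), m₂(t)=(1−β₀)m₁(t+1)+β₀ m₂(t+1), m₃(t)=(1−β₁)m₁(t+1)+β₁ m₃(t+1), m₄(t)=1+(α₁−α₀)m₁(t+1)+α₀ m₂(t+1)−α₁ m₃(t+1). If 0<α₀≤α₁<1 and 0<β₀≤β₁<1, then for all t: m₁(t) ≥ 1, m₂(t) ≥ 0, m₃(t) ≥ 0, m₄(t) ≥ 1, and m₁(t) ≥ m₂(t), m₁(t) ≥ m₃(t). -/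
import Mathlib


set_option maxHeartbeats 1000000 in
/-- The backward recursions m₁,m₂,m₃,m₄ with boundary values m₁(T)=m₄(T)=1,
m₂(T)=m₃(T)=0 satisfy, for 0<α₀≤α₁<1 and 0<β₀≤β₁<1 and all t ≤ T:
m₁(t) ≥ 1, m₂(t) ≥ 0, m₃(t) ≥ 0, m₄(t) ≥ 1, m₁(t) ≥ m₂(t), m₁(t) ≥ m₃(t). -/
theorem stmt16 (T : ℕ) (α₀ α₁ β₀ β₁ : ℝ)
    (hα0 : 0 < α₀) (hαle : α₀ ≤ α₁) (hα1 : α₁ < 1)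
    (hβ0 : 0 < β₀) (hβle : β₀ ≤ β₁) (hβ1 : β₁ < 1)
    (m₁ m₂ m₃ m₄ : ℕ → ℝ)
    (hbdry : m₁ T = 1 ∧ m₂ T = 0 ∧ m₃ T = 0 ∧ m₄ T = 1)
    (hrec : ∀ t < T,
      m₁ t = 1 + (1 - α₀) * m₁ (t+1) + α₀ * m₂ (t+1) ∧
      m₂ t = (1 - β₀) * m₁ (t+1) + β₀ * m₂ (t+1) ∧
      m₃ t = (1 - β₁) * m₁ (t+1) + β₁ * m₃ (t+1) ∧
      m₄ t = 1 + (α₁ - α₀) * m₁ (t+1) + α₀ * m₂ (t+1) - α₁ * m₃ (t+1)) :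
    ∀ t ≤ T, 1 ≤ m₁ t ∧ 0 ≤ m₂ t ∧ 0 ≤ m₃ t ∧ 1 ≤ m₄ t ∧
      m₂ t ≤ m₁ t ∧ m₃ t ≤ m₁ t := by
  obtain ⟨hb1, hb2, hb3, hb4⟩ := hbdry
  have hα01 : α₀ < 1 := lt_of_le_of_lt hαle hα1
  have hβ01 : β₀ < 1 := lt_of_le_of_lt hβle hβ1
  obtain ⟨c, hcdef⟩ : ∃ c : ℝ, c = β₀ - α₀ := ⟨_, rfl⟩
  have h1c : 0 < 1 - c := by rw [hcdef]; linarith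
  obtain ⟨f, hfpos, hfix⟩ : ∃ f : ℝ, 0 < f ∧ (1 - c) * f = 1 :=
    ⟨1 / (1 - c), by positivity, by field_simp⟩
  have habs : |1 - f| = |c| * f := by
    have h : 1 - f = -c * f := by linear_combination -hfix
    rw [h, abs_mul, abs_neg, abs_of_pos hfpos]
  have hclt : |c| < 1 := abs_lt.2 ⟨by rw [hcdef]; linarith, by rw [hcdef]; linarith⟩
  have hcc : (1 : ℝ) - α₀ = 1 - β₀ + c := by rw [hcdef]; ring
  have hdpos : ∀ s : ℕ, |m₁ s - m₂ s - f| ≤ |1 - f| → m₂ s ≤ m₁ s := by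
    intro s hs
    have h1 := (abs_le.1 hs).1
    rw [habs] at h1
    nlinarith [mul_pos (sub_pos.2 hclt) hfpos]
  have key : ∀ k : ℕ, 1 ≤ m₁ (T - k) ∧ 0 ≤ m₂ (T - k) ∧ 0 ≤ m₃ (T - k) ∧
      m₃ (T - k) ≤ m₂ (T - k) ∧ |m₁ (T - k) - m₂ (T - k) - f| ≤ |1 - f| ∧
      1 ≤ m₄ (T - k) := by
    intro k
    induction k with
    | zero =>
      simp only [Nat.sub_zero, hb1, hb2, hb3, hb4]
      refine ⟨le_refl 1, le_refl 0, le_refl 0, le_refl 0, ?_, le_refl 1⟩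
      simp
    | succ k ih =>
      by_cases hk : k < T
      · have ht : T - (k + 1) < T := by omega
        have hts : T - (k + 1) + 1 = T - k := by omega
        obtain ⟨r1, r2, r3, r4⟩ := hrec _ ht
        rw [hts] at r1 r2 r3 r4
        obtain ⟨i1, i2, i3, i4, i5, i6⟩ := ih
        have hd : m₂ (T - k) ≤ m₁ (T - k) := hdpos _ i5
        have h31 : m₃ (T - k) ≤ m₁ (T - k) := le_trans i4 hd
        have p1 : 0 ≤ (1 - α₀) * (m₁ (T - k) - 1) :=
          mul_nonneg (by linarith) (by linarith)
        have p2 : 0 ≤ α₀ * m₂ (T - k) := mul_nonneg hα0.le i2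
        have p3 : 0 ≤ (1 - β₀) * (m₁ (T - k) - 1) :=
          mul_nonneg (by linarith) (by linarith)
        have p4 : 0 ≤ β₀ * m₂ (T - k) := mul_nonneg hβ0.le i2
        have p5 : 0 ≤ (1 - β₁) * (m₁ (T - k) - 1) :=
          mul_nonneg (by linarith) (by linarith)
        have p6 : 0 ≤ β₁ * m₃ (T - k) := mul_nonneg (by linarith) i3
        have p7 : 0 ≤ (β₁ - β₀) * (m₁ (T - k) - m₃ (T - k)) :=
          mul_nonneg (by linarith) (by linarith)
        have p8 : 0 ≤ β₀ * (m₂ (T - k) - m₃ (T - k)) :=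
          mul_nonneg hβ0.le (by linarith)
        have p9 : 0 ≤ (α₁ - α₀) * (m₁ (T - k) - m₃ (T - k)) :=
          mul_nonneg (by linarith) (by linarith)
        have p10 : 0 ≤ α₀ * (m₂ (T - k) - m₃ (T - k)) :=
          mul_nonneg hα0.le (by linarith)
        refine ⟨?_, ?_, ?_, ?_, ?_, ?_⟩
        · rw [r1]; linarith
        · rw [r2]; linarith
        · rw [r3]; linarith
        · rw [r2, r3]; linarith
        · have heq : m₁ (T - (k + 1)) - m₂ (T - (k + 1)) - f
              = c * (m₁ (T - k) - m₂ (T - k) - f) := by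
            rw [r1, r2, hcc]; linear_combination -hfix + m₂ (T - k) * hcdef
          rw [heq, abs_mul]
          calc |c| * |m₁ (T - k) - m₂ (T - k) - f| ≤ 1 * |1 - f| :=
                mul_le_mul hclt.le i5 (abs_nonneg _) zero_le_one
            _ = |1 - f| := one_mul _
        · rw [r4]; linarith
      · have heq : T - (k + 1) = T - k := by omega
        rw [heq]; exact ih
  intro t ht
  have htt : T - (T - t) = t := by omega
  obtain ⟨i1, i2, i3, i4, i5, i6⟩ := key (T - t)
  rw [htt] at i1 i2 i3 i4 i5 i6
  have hd : m₂ t ≤ m₁ t := hdpos _ i5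
  exact ⟨i1, i2, i3, i6, hd, le_trans i4 hd⟩
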